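/- Let X = {0} ∪ {1/n : n ∈ ℕ, n ≥ 1} with the subspace topology from ℝ, let Y = X × ℕ where ℕ carries the discrete topology, let A = {0} × ℕ ⊆ Y, and let f : A → X be given by f(0,n) = 1/n. Then A is closed in Y, X is compact Hausdorff, Y is second-countable locally compact Hausdorff, and the adjunction space X ∪_f Y is not locally compact. -/

import Mathlib

/-!
Let `K` be a neighbourhood of the glued point `[0]`. Since `1/n → 0` and `1/n ∼ (0, n)`,
the interior of `K` contains `(0, n)` for all large `n`, hence also a point `(xₙ, n)` with
`xₙ ≠ 0`. Off `A` the quotient map is injective and sends closed subsets of `Y` to closed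
sets, and the points `(xₙ, n)` lie in distinct open slices `X × {n}`; so they form an
infinite closed discrete subset of `K`, and `K` cannot be compact.
-/

open Set Topology

/-- The relation generating the adjunction-space identification: `a ∈ A ⊆ Y` is glued
to `f a ∈ X`. -/
inductive AdjRel {X Y : Type*} {A : Set Y} (f : A → X) : X ⊕ Y → X ⊕ Y → Prop
  | glue (a : A) : AdjRel f (Sum.inl (f a)) (Sum.inr a.1)

/-- The adjunction space `X ∪_f Y`: the quotient of the disjoint union `X ⊔ Y`
identifying each `a ∈ A` with `f a ∈ X`. -/
def AdjSpace {X Y : Type*} {A : Set Y} (f : A → X) : Type _ := Quot (AdjRel f)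

instance {X Y : Type*} [TopologicalSpace X] [TopologicalSpace Y] {A : Set Y} (f : A → X) :
    TopologicalSpace (AdjSpace f) :=
  inferInstanceAs (TopologicalSpace (Quot (AdjRel f)))

/-- `X = {0} ∪ {1/n : n ∈ ℕ, n ≥ 1}` as a subset of `ℝ`. -/
def XSet : Set ℝ := {0} ∪ {x | ∃ n : ℕ, 1 ≤ n ∧ x = 1 / (n : ℝ)}

lemma one_div_nat_mem_XSet (n : ℕ) : (1 / (n : ℝ)) ∈ XSet := by
  rcases Nat.eq_zero_or_pos n with h | h
  · left; simp [h]
  · right; exact ⟨n, h, rfl⟩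

/-- `A = {0} × ℕ` as a subset of `Y = X × ℕ`. -/
def ASet : Set (↥XSet × ℕ) := {p | (p.1 : ℝ) = 0}

/-- The attaching map `f : A → X`, `f (0, n) = 1/n`. -/
noncomputable def fAttach : ASet → ↥XSet := fun a => ⟨1 / ((a.1.2 : ℕ) : ℝ), one_div_nat_mem_XSet a.1.2⟩

open Filter

namespace AdjSpace

variable {X Y : Type*} {A : Set Y} (f : A → X)

def mk : X ⊕ Y → AdjSpace f := Quot.mk _

def inl (x : X) : AdjSpace f := mk f (Sum.inl x)

def inr (y : Y) : AdjSpace f := mk f (Sum.inr y)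

theorem inl_apply_eq_inr (a : A) : inl f (f a) = inr f a := Quot.sound (.glue a)

theorem eq_inr_of_mk_eq_inr {y : Y} (hy : y ∉ A) {z : X ⊕ Y} (h : mk f z = inr f y) :
    z = Sum.inr y := by
  suffices ∀ z w, Relation.EqvGen (AdjRel f) z w → (z = Sum.inr y ↔ w = Sum.inr y) from
    (this _ _ (Quot.eqvGen_exact h)).mpr rfl
  intro z w hzw
  induction hzw with
  | rel _ _ h =>
    obtain ⟨a⟩ := h
    exact ⟨fun h => (nomatch h), fun h => (hy (Sum.inr.inj h ▸ a.2)).elim⟩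
  | refl => rfl
  | symm _ _ _ ih => exact ih.symm
  | trans _ _ _ _ _ ih₁ ih₂ => exact ih₁.trans ih₂

theorem injOn_inr : InjOn (inr f) Aᶜ := fun _ _ _ hy h =>
  Sum.inr_injective (eq_inr_of_mk_eq_inr f hy h)

theorem mk_preimage_image_inr {V : Set Y} (hV : Disjoint V A) :
    mk f ⁻¹' (inr f '' V) = Sum.inr '' V := by
  refine Subset.antisymm ?_ fun _ ⟨y, hy, hz⟩ => ⟨y, hy, hz ▸ rfl⟩
  rintro z ⟨y, hy, hz⟩
  exact ⟨y, hy, (eq_inr_of_mk_eq_inr f (hV.notMem_of_mem_left hy) hz.symm).symm⟩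

variable [TopologicalSpace X] [TopologicalSpace Y]

theorem isQuotientMap_mk : IsQuotientMap (mk f) := isQuotientMap_quot_mk

theorem continuous_mk : Continuous (mk f) := (isQuotientMap_mk f).continuous

theorem continuous_inl : Continuous (inl f) := (continuous_mk f).comp _root_.continuous_inl

theorem continuous_inr : Continuous (inr f) := (continuous_mk f).comp _root_.continuous_inr

theorem isClosed_image_inr {V : Set Y} (hV : Disjoint V A) (hVc : IsClosed V) :
    IsClosed (inr f '' V) := by
  rw [← (isQuotientMap_mk f).isClosed_preimage, mk_preimage_image_inr f hV]
  exact IsClosedEmbedding.inr.isClosedMap V hVc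

end AdjSpace

theorem Set.Finite.of_isCompact_of_forall_subset_isClosed {Z : Type*} [TopologicalSpace Z]
    {S : Set Z} (hS : IsCompact S) (h : ∀ T ⊆ S, IsClosed T) : S.Finite :=
  hS.finite <| isDiscrete_iff_forall_mem_exists_isClosed.mpr fun T hT =>
    ⟨T, h T hT, inter_eq_left.mpr hT⟩

theorem isClosed_image_prodMk_id {D X : Type*} [TopologicalSpace D] [DiscreteTopology D]
    [TopologicalSpace X] [T2Space X] (g : D → X) (s : Set D) :
    IsClosed ((fun n => (g n, n)) '' s) :=
  (Function.LeftInverse.isClosedEmbedding (f := Prod.snd) (fun _ => rfl) continuous_snd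
    (continuous_of_discreteTopology.prodMk continuous_id)).isClosedMap s (isClosed_discrete s)

theorem XSet_eq_insert_range : XSet = insert 0 (range fun n : ℕ => 1 / (n : ℝ)) := by
  refine Subset.antisymm ?_ (insert_subset (Or.inl rfl) (range_subset_iff.mpr one_div_nat_mem_XSet))
  rintro x (hx | ⟨n, -, rfl⟩)
  exacts [Or.inl hx, Or.inr ⟨n, rfl⟩]

theorem isCompact_XSet : IsCompact XSet :=
  XSet_eq_insert_range ▸ tendsto_one_div_atTop_nhds_zero_nat.isCompact_insert_range

def XSet.zero : XSet := ⟨0, Or.inl rfl⟩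

noncomputable def XSet.inv (n : ℕ) : XSet := ⟨1 / (n : ℝ), one_div_nat_mem_XSet n⟩

theorem XSet.tendsto_inv : Tendsto XSet.inv atTop (𝓝 XSet.zero) :=
  tendsto_subtype_rng.mpr tendsto_one_div_atTop_nhds_zero_nat

theorem XSet.coe_inv_ne_zero {n : ℕ} (hn : n ≠ 0) : (XSet.inv n : ℝ) ≠ 0 := by
  simpa [XSet.inv] using hn

theorem AdjSpace.inl_inv_eq_inr (n : ℕ) :
    inl fAttach (XSet.inv n) = inr fAttach (XSet.zero, n) :=
  inl_apply_eq_inr fAttach ⟨(XSet.zero, n), rfl⟩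

theorem AdjSpace.exists_inr_mem_of_mem_nhds {K : Set (AdjSpace fAttach)}
    (hK : K ∈ 𝓝 (inl fAttach XSet.zero)) :
    ∀ᶠ n in atTop, ∃ x : XSet, (x, n) ∉ ASet ∧ inr fAttach (x, n) ∈ K := by
  have hnhds : ∀ᶠ n in atTop, K ∈ 𝓝 (inr fAttach (XSet.zero, n)) := by
    simpa only [← inl_inv_eq_inr] using
      XSet.tendsto_inv.eventually (((continuous_inl fAttach).tendsto _).eventually
        (eventually_mem_nhds_iff.mpr hK))
  refine hnhds.mono fun n hn => ?_
  have hslice : ∀ᶠ m in atTop, inr fAttach (XSet.inv m, n) ∈ K :=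
    XSet.tendsto_inv.eventually
      ((((continuous_inr fAttach).comp (continuous_id.prodMk continuous_const)).tendsto _) hn)
  obtain ⟨m, hm, hmK⟩ := ((eventually_ne_atTop 0).and hslice).exists
  exact ⟨XSet.inv m, XSet.coe_inv_ne_zero hm, hmK⟩

/-- With `X = {0} ∪ {1/n : n ≥ 1} ⊆ ℝ`, `Y = X × ℕ` (`ℕ` discrete), `A = {0} × ℕ` and
`f(0, n) = 1/n`, the set `A` is closed in `Y`, `X` is compact Hausdorff, `Y` is
second-countable locally compact Hausdorff, and the adjunction space `X ∪_f Y` is not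
locally compact (some point has no compact neighborhood). -/
theorem adjSpace_not_locallyCompact_example :
    DiscreteTopology ℕ ∧
    IsClosed ASet ∧
    CompactSpace ↥XSet ∧ T2Space ↥XSet ∧
    SecondCountableTopology (↥XSet × ℕ) ∧ LocallyCompactSpace (↥XSet × ℕ) ∧
      T2Space (↥XSet × ℕ) ∧
    ¬ WeaklyLocallyCompactSpace (AdjSpace fAttach) := by
  have : CompactSpace XSet := isCompact_iff_compactSpace.mp isCompact_XSet
  refine ⟨inferInstance, isClosed_eq (continuous_subtype_val.comp continuous_fst)
    continuous_const, this, inferInstance, inferInstance, inferInstance, inferInstance, ?_⟩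
  intro
  obtain ⟨K, hK, hKnhds⟩ := exists_compact_mem_nhds (AdjSpace.inl fAttach XSet.zero)
  obtain ⟨N, hN⟩ := eventually_atTop.mp (AdjSpace.exists_inr_mem_of_mem_nhds hKnhds)
  have : Nonempty XSet := ⟨XSet.zero⟩
  choose! g hg0 hgK using hN
  set φ : ℕ → AdjSpace fAttach := fun n => AdjSpace.inr fAttach (g n, n)
  have hφ_closed : ∀ T ⊆ φ '' Ici N, IsClosed T := by
    intro T hT
    obtain ⟨s, hsN, rfl⟩ := subset_image_iff.mp hT
    rw [← image_image (AdjSpace.inr fAttach) (fun n => (g n, n))]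
    refine AdjSpace.isClosed_image_inr fAttach ?_ (isClosed_image_prodMk_id g s)
    exact disjoint_left.mpr fun _ ⟨n, hn, hp⟩ => hp ▸ hg0 n (hsN hn)
  have hφ_inj : InjOn φ (Ici N) := fun m hm n hn h =>
    congrArg Prod.snd ((AdjSpace.injOn_inr fAttach) (hg0 m hm) (hg0 n hn) h)
  have hφ_finite : (φ '' Ici N).Finite :=
    .of_isCompact_of_forall_subset_isClosed
      (hK.of_isClosed_subset (hφ_closed _ Subset.rfl) (image_subset_iff.mpr hgK)) hφ_closed
  exact Set.Ici_infinite N (hφ_finite.of_finite_image hφ_inj)
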